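/- Consider the Gauss–Seidel iteration: enumerate the non-sink states as Q_ns = {1,…,s_ns}; set W^{0,0}_i = S_i for i ∈ Q_ns and W^{0,0}_j = Inv^{f_j}(S_j) for sink states j; for k ≥ 0 and 0 ≤ l ≤ s_ns − 1, set W^{k,l+1}_i = InvPre^{f_i}(G, W^{k,l}, S) for i = l+1 and W^{k,l+1}_j = W^{k,l}_j for j ≠ l+1, and W^{k+1,0} = W^{k,s_ns}. Let W* be any collection satisfying W*_j = Inv^{f_j}(S_j) for sink states j, W*_i = InvPre^{f_i}(G, W*, S) for non-sink states i, and W* ⊆ S element-wise. Then W* ⊆ W^{k,l} (element-wise) for all k ≥ 0 and 0 ≤ l ≤ s_ns; that is, every solution of the fixed-point equations that is contained in the safe sets is contained in every iterate of the algorithm. -/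
import Mathlib


open scoped Classical

/-- One-step controlled predecessor of `V` with respect to the set-valued
dynamics `f : X → U → Set X`. -/
def PreOp {X U : Type*} (f : X → U → Set X) (V : Set X) : Set X :=
  {x | ∃ u : U, f x u ⊆ V}

/-- One-step constrained controlled predecessor. -/
def PreInt {X U : Type*} (f : X → U → Set X) (V S : Set X) : Set X :=
  PreOp f V ∩ S

/-- The maximal controlled invariant set within `S` with respect to `f`: the
union of all `C ⊆ S` such that every `x ∈ C` admits a `u` with `f x u ⊆ C`. -/
def maxInv {X U : Type*} (f : X → U → Set X) (S : Set X) : Set X :=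
  ⋃₀ {C | C ⊆ S ∧ ∀ x ∈ C, ∃ u : U, f x u ⊆ C}

/-- The iterated constrained controlled predecessors `C_{0} = W`,
`C_{l} = PreInt^{f}(C_{l−1}, Si)`. -/
def CIter {X U : Type*} (f : X → U → Set X) (Si : Set X) (W : Set X) :
    ℕ → Set X
  | 0 => W
  | l + 1 => PreInt f (CIter f Si W l) Si

/-- The least preview time `T_min = min_{j : (i,j) ∈ E} τ_ij` among the
successors of `i`. -/
noncomputable def Tmin {Q : Type*} (E : Q → Q → Prop) (τ : Q → Q → ℕ) (i : Q) : ℕ :=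
  sInf {n : ℕ | ∃ j, E i j ∧ τ i j = n}

/-- The sets `C_{T_min}, C_{T_min + 1}, …` of Algorithm 2 (indexed here by the
offset from `T_min`):
`C_{T_min} = Inv^{f_i}(⋂_{j : (i,j) ∈ E} C_{τ_ij, j})` and, for `k > T_min`,
`C_k = PreInt^{f_i}(C_{k−1}, S_i) ∩ ⋂_{j : (i,j) ∈ E, τ_ij ≥ k} C_{τ_ij, j}`,
where `C_{l,j}` is the `l`-fold iterated constrained predecessor of `W_j`. -/
noncomputable def DSeq {Q X U : Type*} (f : Q → X → U → Set X) (E : Q → Q → Prop)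
    (τ : Q → Q → ℕ) (S : Q → Set X) (i : Q) (W : Q → Set X) : ℕ → Set X
  | 0 => maxInv (f i) (⋂ j ∈ {j | E i j}, CIter (f i) (S i) (W j) (τ i j))
  | m + 1 => PreInt (f i) (DSeq f E τ S i W m) (S i) ∩
      ⋂ j ∈ {j | E i j ∧ Tmin E τ i + (m + 1) ≤ τ i j},
        CIter (f i) (S i) (W j) (τ i j)

/-- The operator `InvPre^{f_i}(G, W, S)` of Algorithm 2: `C_{H_i}`, i.e. the
`(H_i − T_min)`-th element of the sequence starting at `C_{T_min}`. -/
noncomputable def InvPre {Q X U : Type*} (f : Q → X → U → Set X) (E : Q → Q → Prop)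
    (τ : Q → Q → ℕ) (Hld : Q → ℕ) (S : Q → Set X) (i : Q) (W : Q → Set X) :
    Set X :=
  DSeq f E τ S i W (Hld i - Tmin E τ i)
/-- The initialization of the Gauss–Seidel iteration of Algorithm 1:
`W^{0,0}_i = S_i` for non-sink states `i` and `W^{0,0}_j = Inv^{f_j}(S_j)` for
sink states `j`. -/
noncomputable def GSInit {Q X U : Type*} (f : Q → X → U → Set X) (E : Q → Q → Prop)
    (S : Q → Set X) : Q → Set X :=
  fun q => if ∃ p, E q p then S q else maxInv (f q) (S q)

/-- One inner step of the Gauss–Seidel iteration: update component `i` to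
`InvPre^{f_i}(G, W, S)` and leave the other components unchanged. -/
noncomputable def GSStep {Q X U : Type*} (f : Q → X → U → Set X) (E : Q → Q → Prop)
    (τ : Q → Q → ℕ) (Hld : Q → ℕ) (S : Q → Set X) (i : Q)
    (W : Q → Set X) : Q → Set X :=
  fun q => if q = i then InvPre f E τ Hld S i W else W q

/-- The Gauss–Seidel iteration of Algorithm 1, with the non-sink states
enumerated by `e : Fin m → Q` and updated cyclically in that order:
`GS (k * m + l)` is the iterate `W^{k,l}`. -/
noncomputable def GS {Q X U : Type*} (f : Q → X → U → Set X) (E : Q → Q → Prop)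
    (τ : Q → Q → ℕ) (Hld : Q → ℕ) (S : Q → Set X) {m : ℕ}
    (e : Fin m → Q) : ℕ → Q → Set X
  | 0 => GSInit f E S
  | n + 1 =>
      if h : 0 < m then
        GSStep f E τ Hld S (e ⟨n % m, Nat.mod_lt n h⟩)
          (GS f E τ Hld S e n)
      else GS f E τ Hld S e n

lemma PreOp_mono {X U : Type*} (f : X → U → Set X) {V V' : Set X} (h : V ⊆ V') :
    PreOp f V ⊆ PreOp f V' := fun _ ⟨u, hu⟩ => ⟨u, hu.trans h⟩

lemma CIter_mono {X U : Type*} (f : X → U → Set X) (Si : Set X) {W W' : Set X}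
    (h : W ⊆ W') : ∀ l, CIter f Si W l ⊆ CIter f Si W' l := by
  intro l
  induction l with
  | zero => exact h
  | succ l ih =>
      exact Set.inter_subset_inter_left _ (PreOp_mono f ih)

lemma maxInv_mono {X U : Type*} (f : X → U → Set X) {S S' : Set X} (h : S ⊆ S') :
    maxInv f S ⊆ maxInv f S' := by
  apply Set.sUnion_subset
  intro C hC
  exact Set.subset_sUnion_of_mem ⟨hC.1.trans h, hC.2⟩

lemma DSeq_mono {Q X U : Type*} (f : Q → X → U → Set X) (E : Q → Q → Prop)
    (τ : Q → Q → ℕ) (S : Q → Set X) (i : Q) {W W' : Q → Set X}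
    (h : ∀ j, W j ⊆ W' j) : ∀ n, DSeq f E τ S i W n ⊆ DSeq f E τ S i W' n := by
  intro n
  induction n with
  | zero =>
      apply maxInv_mono
      exact Set.iInter₂_mono fun j _ => CIter_mono _ _ (h j) _
  | succ n ih =>
      apply Set.inter_subset_inter
      · exact Set.inter_subset_inter_left _ (PreOp_mono _ ih)
      · exact Set.iInter₂_mono fun j _ => CIter_mono _ _ (h j) _

lemma InvPre_mono {Q X U : Type*} (f : Q → X → U → Set X) (E : Q → Q → Prop)
    (τ : Q → Q → ℕ) (Hld : Q → ℕ) (S : Q → Set X) (i : Q) {W W' : Q → Set X}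
    (h : ∀ j, W j ⊆ W' j) : InvPre f E τ Hld S i W ⊆ InvPre f E τ Hld S i W' :=
  DSeq_mono f E τ S i h _

/-- let `W*` be any collection with `W*_j = Inv^{f_j}(S_j)` for
sink states `j`, `W*_i = InvPre^{f_i}(G, W*, S)` for non-sink states `i`, and
`W* ⊆ S` element-wise. Then `W*` is contained (element-wise) in every iterate
`W^{k,l} = GS (k * m + l)` of the Gauss–Seidel iteration of Algorithm 1 (with
the non-sink states enumerated bijectively by `e : Fin m → Q`, each non-sink
state having least holding time `H_i ≥ 1` with `H_i ≥ T_min`). -/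
theorem solution_subset_gaussSeidel {Q X U : Type*} (f : Q → X → U → Set X)
    (E : Q → Q → Prop) (τ : Q → Q → ℕ) (Hld : Q → ℕ) (S : Q → Set X)
    {m : ℕ} (e : Fin m → Q) (he : Function.Injective e)
    (hrange : ∀ q, (∃ p, E q p) ↔ ∃ r, e r = q)
    (hH1 : ∀ i, (∃ p, E i p) → 1 ≤ Hld i)
    (hTH : ∀ i, (∃ p, E i p) → Tmin E τ i ≤ Hld i)
    (Wst : Q → Set X)
    (hWS : ∀ q, Wst q ⊆ S q)
    (hsink : ∀ j, (∀ p, ¬ E j p) → Wst j = maxInv (f j) (S j))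
    (hfix : ∀ i, (∃ p, E i p) → Wst i = InvPre f E τ Hld S i Wst) :
    ∀ k : ℕ, ∀ l ≤ m, ∀ q : Q, Wst q ⊆ GS f E τ Hld S e (k * m + l) q := by
  have main : ∀ n : ℕ, ∀ q : Q, Wst q ⊆ GS f E τ Hld S e n q := by
    intro n
    induction n with
    | zero =>
        intro q
        show Wst q ⊆ GSInit f E S q
        unfold GSInit
        by_cases h : ∃ p, E q p
        · simpa [h] using hWS q
        · simp only [h, if_false]
          rw [hsink q (by push_neg at h; exact h)]
    | succ n ih =>
        intro q
        show Wst q ⊆ GS f E τ Hld S e (n + 1) q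
        unfold GS
        by_cases hm : 0 < m
        · simp only [hm, dif_pos]
          set i := e ⟨n % m, Nat.mod_lt n hm⟩ with hi
          unfold GSStep
          by_cases hq : q = i
          · subst hq
            simp only [if_pos rfl]
            have hns : ∃ p, E i p := (hrange i).mpr ⟨_, hi.symm⟩
            rw [hfix i hns]
            exact InvPre_mono f E τ Hld S i ih
          · simpa [hq] using ih q
        · simpa [hm] using ih q
  intro k l _ q
  exact main _ q
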